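/- In the dot-product protocol, if β - α = a/b + h·R₂/(b·R₃) - α where a = Σ_{j=1}^d U_j · y' - c · y', h = gᵀ · y', U = Q·X, b = Σ_{j=1}^d Q_{j,r}, c = Σ_{i≠r}(x_iᵀ · Σ_{j=1}^d Q_{j,i}) + R₁R₂fᵀ, g = R₁R₃f, X has r-th row (x₁,...,x_L,1) and i-th row x_i for i≠r, and y' = (y₁,...,y_L,α)ᵀ, then β - α = xᵀ·y, assuming b ≠ 0 and R₃ ≠ 0. -/

import Mathlib

/-!
Adding up the rows of `U = Q·X` weights each row `X i` by the column sum `∑ j, Q j i`, so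
subtracting `c` leaves only `b · (x, 1)` and the mask `-R₁R₂ f`. Against `y' = (y, α)` this gives
`a = b (x ⬝ y + α) - R₁R₂ (f ⬝ y')`, while `h = R₁R₃ (f ⬝ y')`; the mask cancels in
`β = a/b + h R₂/(b R₃)`.
-/

open Finset Matrix

theorem Fin.snoc_dotProduct_snoc {α : Type*} [Mul α] [AddCommMonoid α] {n : ℕ}
    (u v : Fin n → α) (s t : α) :
    (Fin.snoc u s : Fin (n + 1) → α) ⬝ᵥ Fin.snoc v t = u ⬝ᵥ v + s * t := by
  simp [dotProduct, Fin.sum_univ_castSucc]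

theorem Matrix.one_vecMul_mul_sub_sum_erase {m n o R : Type*} [Fintype m] [Fintype n]
    [DecidableEq n] [Ring R] (Q : Matrix m n R) (X : Matrix n o R) (r : n) :
    1 ᵥ* (Q * X) - ∑ i ∈ univ.erase r, (∑ j, Q j i) • X i = (∑ j, Q j r) • X r := by
  rw [← vecMul_vecMul, vecMul_eq_sum, ← sum_erase_add _ _ (mem_univ r)]
  simp only [vecMul, one_dotProduct, add_sub_cancel_left]

open Finset in
/-- Correctness of the (raw) two-party dot-product protocol: with the messages
`U = Q·X`, `c`, `g` from `P₀` and `a`, `h` from `P_i`, and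
`β = a/b + h·R₂/(b·R₃)`, it holds that `β - α = xᵀ·y`. -/
theorem stmt_4 (L d : ℕ) (Q : Matrix (Fin d) (Fin d) ℝ) (r : Fin d)
    (f : Fin (L + 1) → ℝ) (R₁ R₂ R₃ : ℝ) (hR₃ : R₃ ≠ 0)
    (x y : Fin L → ℝ) (α : ℝ)
    (X : Matrix (Fin d) (Fin (L + 1)) ℝ)
    (hXr : X r = Fin.snoc x 1)
    (y' : Fin (L + 1) → ℝ) (hy' : y' = Fin.snoc y α)
    (U : Matrix (Fin d) (Fin (L + 1)) ℝ) (hU : U = Q * X)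
    (b : ℝ) (hb : b = ∑ j, Q j r) (hb0 : b ≠ 0)
    (c : Fin (L + 1) → ℝ)
    (hc : c = (∑ i ∈ univ.erase r, (∑ j, Q j i) • X i) + (R₁ * R₂) • f)
    (g : Fin (L + 1) → ℝ) (hg : g = (R₁ * R₃) • f)
    (a : ℝ) (ha : a = (∑ j, ∑ p, U j p * y' p) - ∑ p, c p * y' p)
    (h : ℝ) (hh : h = ∑ p, g p * y' p)
    (β : ℝ) (hβ : β = a / b + h * R₂ / (b * R₃)) :
    β - α = ∑ p, x p * y p := by
  show β - α = x ⬝ᵥ y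
  have ha_dot : a = (1 ᵥ* U - c) ⬝ᵥ y' := by
    rw [sub_dotProduct, ← dotProduct_mulVec, one_dotProduct, ha]
    rfl
  have ha' : a = b * (x ⬝ᵥ y + α) - R₁ * R₂ * (f ⬝ᵥ y') := by
    rw [ha_dot, hc, ← sub_sub, hU, one_vecMul_mul_sub_sum_erase, sub_dotProduct,
      smul_dotProduct, smul_dotProduct, hXr, hy', Fin.snoc_dotProduct_snoc, hb, smul_eq_mul,
      smul_eq_mul, one_mul]
  have hh' : h = R₁ * R₃ * (f ⬝ᵥ y') := by
    rw [hh, hg]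
    exact smul_dotProduct _ _ _
  rw [hβ, ha', hh']
  field_simp
  ring
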